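/- For u ∈ S^n and every proper convex body K contained in the open hemisphere S_u^+, the Euclidean support function of the gnomonic image satisfies h(g_u(K), v) = tan h_u(K, v) for every v in the equator S_u = {v ∈ S^n : u·v = 0}. In particular, K is uniquely determined by its spherical support function h_u(K, ·). -/

import Mathlib

open scoped RealInnerProductSpace Pointwise
open Real

noncomputable section

/-- `Esp n` is the ambient Euclidean space `ℝ^{n+1}` containing the unit sphere `S^n`. -/
abbrev Esp (n : ℕ) : Type := EuclideanSpace ℝ (Fin (n + 1))

/-- The unit sphere `S^n ⊆ ℝ^{n+1}`. -/
def uSphere (n : ℕ) : Set (Esp n) := {x | ‖x‖ = 1}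

/-- `rad A = {λ • x : λ ≥ 0, x ∈ A}`. -/
def radSet {n : ℕ} (A : Set (Esp n)) : Set (Esp n) :=
  {y | ∃ l : ℝ, 0 ≤ l ∧ ∃ x ∈ A, y = l • x}

/-- A set `A ⊆ S^n` is spherically convex if `rad A` is convex. -/
def SphConvex {n : ℕ} (A : Set (Esp n)) : Prop := Convex ℝ (radSet A)

/-- The open hemisphere centered at `u`. -/
def openHemi {n : ℕ} (u : Esp n) : Set (Esp n) := {v | ‖v‖ = 1 ∧ 0 < ⟪u, v⟫}

/-- The equator `S_u = {v ∈ S^n : u ⬝ v = 0}`. -/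
def equator {n : ℕ} (u : Esp n) : Set (Esp n) := {v | ‖v‖ = 1 ∧ ⟪u, v⟫ = 0}

/-- Proper convex bodies contained in the open hemisphere centered at `u`:
the class `K_u^p(S^n)`. -/
def properBodies {n : ℕ} (u : Esp n) : Set (Set (Esp n)) :=
  {K | K.Nonempty ∧ IsClosed K ∧ K ⊆ openHemi u ∧ SphConvex K}

/-- All proper convex bodies `K^p(S^n)`. -/
def allProperBodies (n : ℕ) : Set (Set (Esp n)) :=
  {K | ∃ u : Esp n, ‖u‖ = 1 ∧ K ∈ properBodies u}

/-- The gnomonic projection `g_u(v) = v/(u⬝v) − u`. -/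
def gno {n : ℕ} (u v : Esp n) : Esp n := (⟪u, v⟫)⁻¹ • v - u

/-- The inverse gnomonic projection `x ↦ (x+u)/‖x+u‖`. -/
def gnoInv {n : ℕ} (u x : Esp n) : Esp n := ‖x + u‖⁻¹ • (x + u)

/-- The hyperplane `ℝ^n_u = u^⊥` of `ℝ^{n+1}`. -/
def hyper {n : ℕ} (u : Esp n) : Set (Esp n) := {x | ⟪u, x⟫ = 0}

/-- The class `K(ℝ^n_u)` of (nonempty) compact convex subsets of the hyperplane `u^⊥`. -/
def cptCvx {n : ℕ} (u : Esp n) : Set (Set (Esp n)) :=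
  {C | C.Nonempty ∧ IsCompact C ∧ Convex ℝ C ∧ C ⊆ hyper u}

/-- The spherical support function `h_u(K,v) = max {sgn(v⬝w) d(u, w|S_{u,v}) : w ∈ K}`,
where `d(u, w|S_{u,v}) = arccos ((u⬝w)/√((u⬝w)² + (v⬝w)²))`. -/
def sphSupp {n : ℕ} (u : Esp n) (K : Set (Esp n)) (v : Esp n) : ℝ :=
  sSup ((fun w => Real.sign ⟪v, w⟫ *
    Real.arccos (⟪u, w⟫ / Real.sqrt (⟪u, w⟫ ^ 2 + ⟪v, w⟫ ^ 2))) '' K)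

/-- The Euclidean support function `h(C,x) = sup {x ⬝ y : y ∈ C}`. -/
def esupp {n : ℕ} (C : Set (Esp n)) (x : Esp n) : ℝ :=
  sSup ((fun y => ⟪x, y⟫) '' C)

/-- Spherical (geodesic) distance on `S^n`. -/
def sphDist {n : ℕ} (x y : Esp n) : ℝ := Real.arccos ⟪x, y⟫

/-- The Hausdorff distance `δ_s` induced by the spherical distance. -/
def sphHaus {n : ℕ} (A B : Set (Esp n)) : ℝ :=
  sInf {r | 0 ≤ r ∧ (∀ a ∈ A, ∃ b ∈ B, sphDist a b ≤ r) ∧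
    (∀ b ∈ B, ∃ a ∈ A, sphDist a b ≤ r)}

/-- The metric `γ_u(K,L) = max_{v ∈ S_u} |h_u(K,v) − h_u(L,v)|`. -/
def gammaU {n : ℕ} (u : Esp n) (K L : Set (Esp n)) : ℝ :=
  sSup ((fun v => |sphSupp u K v - sphSupp u L v|) '' equator u)

/-- Spherical projection of `K` onto the great subsphere `V ∩ S^n`:
`K|S = (rad K | V) ∩ S^n`. -/
def sphProj {n : ℕ} (V : Submodule ℝ (Esp n)) (K : Set (Esp n)) : Set (Esp n) :=
  ((fun x => (V.orthogonalProjection x : Esp n)) '' radSet K) ∩ uSphere n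

/-- Orthogonal projection of a subset of `ℝ^{n+1}` onto a linear subspace `W`. -/
def eProj {n : ℕ} (W : Submodule ℝ (Esp n)) (C : Set (Esp n)) : Set (Esp n) :=
  (fun x => (W.orthogonalProjection x : Esp n)) '' C

/-- The spherical convex hull: the intersection of all spherically convex subsets of `S^n`
containing `A`. -/
def sphHull {n : ℕ} (A : Set (Esp n)) : Set (Esp n) :=
  ⋂₀ {B | A ⊆ B ∧ B ⊆ uSphere n ∧ SphConvex B}

/-- The set `C` of pairs of proper convex bodies contained in a common open hemisphere. -/
def pairsC (n : ℕ) : Set (Set (Esp n) × Set (Esp n)) :=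
  {p | ∃ u : Esp n, ‖u‖ = 1 ∧ p.1 ∈ properBodies u ∧ p.2 ∈ properBodies u}

/-- `u`-projection covariance of a binary operation on `K_u^p(S^n)`:
`(K|S) * (L|S) = (K*L)|S` for all great subspheres `S = V ∩ S^n` through `u`
with `0 ≤ k = dim S ≤ n − 1`. -/
def uProjCovariant {n : ℕ} (u : Esp n)
    (op : Set (Esp n) → Set (Esp n) → Set (Esp n)) : Prop :=
  ∀ V : Submodule ℝ (Esp n), u ∈ V → Module.finrank ℝ V ≤ n →
    ∀ K ∈ properBodies u, ∀ L ∈ properBodies u,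
      op (sphProj V K) (sphProj V L) = sphProj V (op K L)

/-- Projection covariance: `u`-projection covariance for every `u ∈ S^n`. -/
def projCovariantC {n : ℕ} (op : Set (Esp n) → Set (Esp n) → Set (Esp n)) : Prop :=
  ∀ u : Esp n, ‖u‖ = 1 → uProjCovariant u op

/-- Projection covariance for operations on compact convex subsets of `u^⊥`. -/
def eProjCovariant {n : ℕ} (u : Esp n)
    (op : Set (Esp n) → Set (Esp n) → Set (Esp n)) : Prop :=
  ∀ W : Submodule ℝ (Esp n), (W : Set (Esp n)) ⊆ hyper u →
    ∀ K ∈ cptCvx u, ∀ L ∈ cptCvx u,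
      op (eProj W K) (eProj W L) = eProj W (op K L)

/-! The gnomonic image `g_u(K)` is the section of the convex cone `rad K` by the hyperplane
`⟪u, ·⟫ = 1`, translated by `-u`, hence a compact convex subset of `u^⊥`; and for `v ⊥ u` the
quantity `sgn(v⬝w) d(u, w|S_{u,v})` equals `arctan (v ⬝ g_u(w))`. Since `arctan` is increasing and
continuous, it commutes with the supremum, giving `h_u(K,v) = arctan h(g_u(K), v)`. A compact convex
subset of `u^⊥` is determined by its support function on the equator (by positive homogeneity and
Hahn–Banach), and `g_u` is injective on the open hemisphere, so `h_u(K, ·)` determines `K`. -/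

lemma sign_mul_arccos_div_sqrt {a : ℝ} (ha : 0 < a) (b : ℝ) :
    Real.sign b * arccos (a / √(a ^ 2 + b ^ 2)) = arctan (b / a) := by
  have harccos : arccos (a / √(a ^ 2 + b ^ 2)) = arctan (|b| / a) := by
    rw [arctan_eq_arccos (by positivity)]
    congr 1
    have hsum : 1 + (|b| / a) ^ 2 = (a ^ 2 + b ^ 2) / a ^ 2 := by
      rw [div_pow, sq_abs]; field_simp
    rw [hsum, sqrt_div' _ (sq_nonneg a), sqrt_sq ha.le, inv_div]
  rw [harccos]
  rcases lt_trichotomy b 0 with hb | rfl | hb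
  · rw [Real.sign_of_neg hb, abs_of_neg hb, neg_div, arctan_neg, neg_one_mul, neg_neg]
  · simp
  · rw [Real.sign_of_pos hb, abs_of_pos hb, one_mul]

section SupportFunction

variable {n : ℕ}

lemma esupp_zero (C : Set (Esp n)) : esupp C 0 = 0 := by
  simp only [esupp, inner_zero_left]
  rcases C.eq_empty_or_nonempty with rfl | hC
  · simp
  · rw [hC.image_const, csSup_singleton]

lemma esupp_smul (C : Set (Esp n)) {r : ℝ} (hr : 0 ≤ r) (x : Esp n) :
    esupp C (r • x) = r * esupp C x := by
  have himage : (fun y => ⟪r • x, y⟫) '' C = r • (fun y => ⟪x, y⟫) '' C := by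
    rw [← Set.image_smul, Set.image_image]
    simp only [real_inner_smul_left, smul_eq_mul]
  rw [esupp, esupp, himage, Real.sSup_smul_of_nonneg hr, smul_eq_mul]

lemma inner_le_esupp {C : Set (Esp n)} (hC : IsCompact C) {z : Esp n} (hz : z ∈ C)
    (x : Esp n) : ⟪x, z⟫ ≤ esupp C x :=
  le_csSup (hC.image (continuous_const.inner continuous_id)).bddAbove (Set.mem_image_of_mem _ hz)

lemma subset_of_esupp_le {C D : Set (Esp n)} (hC : IsCompact C) (hD : D.Nonempty)
    (hDc : IsClosed D) (hDv : Convex ℝ D) (h : ∀ x, esupp C x ≤ esupp D x) : C ⊆ D := by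
  intro z hz
  by_contra hzD
  obtain ⟨f, c, hfD, hfz⟩ := geometric_hahn_banach_closed_point hDv hDc hzD
  set x := (InnerProductSpace.toDual ℝ (Esp n)).symm f
  have hx : ∀ y, ⟪x, y⟫ = f y := fun y => InnerProductSpace.toDual_symm_apply
  have hDle : esupp D x ≤ c :=
    csSup_le (hD.image _) (by rintro _ ⟨y, hy, rfl⟩; exact (hx y).trans_le (hfD y hy).le)
  have hzle := (inner_le_esupp hC hz x).trans (h x)
  rw [hx] at hzle
  linarith

lemma esupp_eq_of_eqOn_equator {u : Esp n} (hu : ‖u‖ = 1) {C D : Set (Esp n)}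
    (hC : C ⊆ hyper u) (hD : D ⊆ hyper u) (h : ∀ v ∈ equator u, esupp C v = esupp D v)
    (x : Esp n) : esupp C x = esupp D x := by
  set x' := x - ⟪u, x⟫ • u
  have hx'u : ⟪u, x'⟫ = 0 := by
    rw [inner_sub_right, real_inner_smul_right, real_inner_self_eq_norm_sq, hu]; ring
  have hproj : ∀ E ⊆ hyper u, esupp E x = esupp E x' := fun E hE => by
    refine congrArg sSup (Set.image_congr fun y hy => ?_)
    rw [inner_sub_left, real_inner_smul_left, show ⟪u, y⟫ = 0 from hE hy, mul_zero, sub_zero]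
  rw [hproj C hC, hproj D hD]
  rcases eq_or_ne x' 0 with h0 | h0
  · rw [h0, esupp_zero, esupp_zero]
  · have hnorm : ‖x'‖ ≠ 0 := norm_ne_zero_iff.2 h0
    have hv : ‖x'‖⁻¹ • x' ∈ equator u := by
      refine ⟨?_, by rw [real_inner_smul_right, hx'u, mul_zero]⟩
      rw [norm_smul, norm_inv, norm_norm, inv_mul_cancel₀ hnorm]
    have hx' : x' = ‖x'‖ • (‖x'‖⁻¹ • x') := by rw [smul_smul, mul_inv_cancel₀ hnorm, one_smul]
    rw [hx', esupp_smul _ (norm_nonneg _), esupp_smul _ (norm_nonneg _), h _ hv]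

lemma eq_of_esupp_eqOn_equator {u : Esp n} (hu : ‖u‖ = 1) {C D : Set (Esp n)}
    (hC : C ∈ cptCvx u) (hD : D ∈ cptCvx u) (h : ∀ v ∈ equator u, esupp C v = esupp D v) :
    C = D := by
  have hCD := esupp_eq_of_eqOn_equator hu hC.2.2.2 hD.2.2.2 h
  exact (subset_of_esupp_le hC.2.1 hD.1 hD.2.1.isClosed hD.2.2.1 fun x => (hCD x).le).antisymm
    (subset_of_esupp_le hD.2.1 hC.1 hC.2.1.isClosed hC.2.2.1 fun x => (hCD x).ge)

end SupportFunction

section Gnomonic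

variable {n : ℕ} {u : Esp n}

lemma inner_gno_self (hu : ‖u‖ = 1) {w : Esp n} (hw : ⟪u, w⟫ ≠ 0) : ⟪u, gno u w⟫ = 0 := by
  rw [gno, inner_sub_right, real_inner_smul_right, inv_mul_cancel₀ hw,
    real_inner_self_eq_norm_sq, hu]
  norm_num

lemma inner_gno_of_inner_eq_zero {v : Esp n} (hv : ⟪u, v⟫ = 0) (w : Esp n) :
    ⟪v, gno u w⟫ = ⟪v, w⟫ / ⟪u, w⟫ := by
  rw [gno, inner_sub_right, real_inner_smul_right, real_inner_comm u v, hv, sub_zero,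
    div_eq_inv_mul]

lemma gnoInv_gno {w : Esp n} (hw : w ∈ openHemi u) : gnoInv u (gno u w) = w := by
  have hpos : 0 < ⟪u, w⟫ := hw.2
  have hnorm : ‖(⟪u, w⟫)⁻¹ • w‖ = (⟪u, w⟫)⁻¹ := by
    rw [norm_smul, norm_inv, Real.norm_of_nonneg hpos.le, hw.1, mul_one]
  rw [gnoInv, gno, sub_add_cancel, hnorm, inv_inv, smul_smul, mul_inv_cancel₀ hpos.ne', one_smul]

lemma injOn_gno : Set.InjOn (gno u) (openHemi u) :=
  Set.LeftInvOn.injOn fun _ hw => gnoInv_gno hw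

lemma isCompact_of_mem_properBodies {K : Set (Esp n)} (hK : K ∈ properBodies u) :
    IsCompact K :=
  Metric.isCompact_of_isClosed_isBounded hK.2.1
    (isBounded_iff_forall_norm_le.2 ⟨1, fun _ hx => (hK.2.2.1 hx).1.le⟩)

lemma isCompact_gno_image {K : Set (Esp n)} (hK : K ∈ properBodies u) :
    IsCompact (gno u '' K) := by
  refine (isCompact_of_mem_properBodies hK).image_of_continuousOn
    (ContinuousOn.sub ?_ continuousOn_const)
  exact ((continuous_const.inner continuous_id).continuousOn.inv₀
    fun w hw => (hK.2.2.1 hw).2.ne').smul continuousOn_id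

lemma gno_image_eq {K : Set (Esp n)} (hK : K ⊆ openHemi u) :
    gno u '' K = (fun x => -u + x) '' (radSet K ∩ {x | ⟪u, x⟫ = 1}) := by
  ext y
  constructor
  · rintro ⟨w, hw, rfl⟩
    have hpos : 0 < ⟪u, w⟫ := (hK hw).2
    refine ⟨(⟪u, w⟫)⁻¹ • w, ⟨⟨_, (inv_pos.2 hpos).le, w, hw, rfl⟩, ?_⟩, ?_⟩
    · rw [Set.mem_ofPred_eq, real_inner_smul_right, inv_mul_cancel₀ hpos.ne']
    · exact neg_add_eq_sub u _
  · rintro ⟨_, ⟨⟨l, -, w, hw, rfl⟩, hl⟩, rfl⟩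
    rw [Set.mem_ofPred_eq, real_inner_smul_right] at hl
    refine ⟨w, hw, ?_⟩
    rw [gno, eq_inv_of_mul_eq_one_left hl]
    exact (neg_add_eq_sub u _).symm

lemma gno_image_mem_cptCvx (hu : ‖u‖ = 1) {K : Set (Esp n)} (hK : K ∈ properBodies u) :
    gno u '' K ∈ cptCvx u := by
  refine ⟨hK.1.image _, isCompact_gno_image hK, ?_, ?_⟩
  · rw [gno_image_eq hK.2.2.1]
    exact (hK.2.2.2.inter (convex_hyperplane (innerₛₗ ℝ u).isLinear 1)).translate _
  · rintro _ ⟨w, hw, rfl⟩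
    exact inner_gno_self hu (hK.2.2.1 hw).2.ne'

lemma sphSupp_eq_arctan_esupp {K : Set (Esp n)} (hK : K ∈ properBodies u) {v : Esp n}
    (hv : ⟪u, v⟫ = 0) : sphSupp u K v = arctan (esupp (gno u '' K) v) := by
  have himage : (fun w => Real.sign ⟪v, w⟫ * arccos (⟪u, w⟫ / √(⟪u, w⟫ ^ 2 + ⟪v, w⟫ ^ 2))) '' K
      = arctan '' ((fun y => ⟪v, y⟫) '' (gno u '' K)) := by
    rw [Set.image_image, Set.image_image]
    refine Set.image_congr fun w hw => ?_
    rw [inner_gno_of_inner_eq_zero hv, sign_mul_arccos_div_sqrt (hK.2.2.1 hw).2]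
  have hbdd : BddAbove ((fun y => ⟪v, y⟫) '' (gno u '' K)) :=
    ((isCompact_gno_image hK).image (continuous_const.inner continuous_id)).bddAbove
  rw [sphSupp, himage, esupp]
  exact (arctan_strictMono.monotone.map_csSup_of_continuousAt continuous_arctan.continuousAt
    ((hK.1.image _).image _) hbdd).symm

end Gnomonic

theorem stmt4_general {n : ℕ} (u : Esp n) (hu : ‖u‖ = 1) :
    (∀ K ∈ properBodies u, ∀ v ∈ equator u,
      esupp (gno u '' K) v = Real.tan (sphSupp u K v)) ∧
    (∀ K ∈ properBodies u, ∀ L ∈ properBodies u,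
      (∀ v ∈ equator u, sphSupp u K v = sphSupp u L v) → K = L) := by
  have hsupp : ∀ K ∈ properBodies u, ∀ v ∈ equator u,
      sphSupp u K v = arctan (esupp (gno u '' K) v) :=
    fun K hK v hv => sphSupp_eq_arctan_esupp hK hv.2
  refine ⟨fun K hK v hv => by rw [hsupp K hK v hv, tan_arctan], fun K hK L hL hKL => ?_⟩
  have himage : gno u '' K = gno u '' L :=
    eq_of_esupp_eqOn_equator hu (gno_image_mem_cptCvx hu hK) (gno_image_mem_cptCvx hu hL)
      fun v hv => arctan_injective (by rw [← hsupp K hK v hv, ← hsupp L hL v hv, hKL v hv])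
  exact (injOn_gno.image_eq_image_iff hK.2.2.1 hL.2.2.1).1 himage

/-- For every proper convex body `K ⊆ S_u^+` one has
`h(g_u(K), v) = tan h_u(K, v)` for all `v` in the equator `S_u`; in particular, `K` is
uniquely determined by its spherical support function. -/
theorem stmt4 {n : ℕ} (hn : 2 ≤ n) (u : Esp n) (hu : ‖u‖ = 1) :
    (∀ K ∈ properBodies u, ∀ v ∈ equator u,
      esupp (gno u '' K) v = Real.tan (sphSupp u K v)) ∧
    (∀ K ∈ properBodies u, ∀ L ∈ properBodies u,
      (∀ v ∈ equator u, sphSupp u K v = sphSupp u L v) → K = L) :=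
  stmt4_general u hu
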